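/- Assume Ω is an open bounded domain of ℝ^d, d ≥ 2, which is connected and of class C^2, and b is Lipschitz-continuous on the closure of Ω. Let σ2^0 be the solution to −div(∇σ + bσ) = 0 in Ω, (∇σ + bσ)·n = b·n − |∂Ω|^{-1}∫_{∂Ω} b·n on ∂Ω, |Ω|^{-1}∫_Ω σ = 1, and let σ1 be the invariant measure (solution of the homogeneous Neumann adjoint problem with mean 1 and inf_Ω σ1 > 0). Then the set of solutions σ ∈ H^1(Ω) to the problem: −div(∇σ + bσ) = 0 in Ω, (∇σ + bσ)·n = b·n − |∂Ω|^{-1}∫_{∂Ω} b·n on ∂Ω, inf_Ω σ > 0, is exactly { σ2^0 + κ σ1 : κ ∈ ℝ such that inf_Ω (σ2^0 + κ σ1) > 0 }. -/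

import Mathlib

open MeasureTheory Real Set
open scoped ENNReal NNReal Topology

noncomputable section

/-- Euclidean space `ℝ^d`. -/
abbrev Ed (d : ℕ) : Type := EuclideanSpace ℝ (Fin d)

/-- `Ω` is a nonempty bounded open domain of `ℝ^d` of class `C^k`:
near every boundary point, `Ω` coincides with the strict sublevel set of a `C^k`
function with nonvanishing differential. -/
def IsCkDomain {d : ℕ} (k : ℕ∞) (Ω : Set (Ed d)) : Prop :=
  IsOpen Ω ∧ Bornology.IsBounded Ω ∧ Ω.Nonempty ∧
    ∀ x ∈ frontier Ω, ∃ (U : Set (Ed d)) (f : Ed d → ℝ),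
      IsOpen U ∧ x ∈ U ∧ ContDiffOn ℝ k f U ∧ (∀ y ∈ U, fderiv ℝ f y ≠ 0) ∧
      Ω ∩ U = {y | y ∈ U ∧ f y < 0}

/-- A bounded nonempty open convex polyhedral domain. -/
def IsConvexPolyhedralDomain {d : ℕ} (Ω : Set (Ed d)) : Prop :=
  IsOpen Ω ∧ Bornology.IsBounded Ω ∧ Ω.Nonempty ∧ Convex ℝ Ω ∧
    ∃ s : Finset (Ed d × ℝ), Ω = ⋂ q ∈ s, {x : Ed d | (inner ℝ q.1 x : ℝ) < q.2}

/-- The (classical) gradient of `u`. -/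
def grad {d : ℕ} (u : Ed d → ℝ) (x : Ed d) : Ed d := gradient u x

/-- `L^p(Ω)` norm. -/
def lpNorm {d : ℕ} (Ω : Set (Ed d)) (p : ℝ) (u : Ed d → ℝ) : ℝ :=
  (∫ x in Ω, |u x| ^ p) ^ (1 / p)

/-- `L^p(Ω)` norm of a vector field. -/
def lpNormV {d : ℕ} (Ω : Set (Ed d)) (p : ℝ) (u : Ed d → Ed d) : ℝ :=
  (∫ x in Ω, ‖u x‖ ^ p) ^ (1 / p)

/-- sup norm over `Ω` (model for the `L^∞(Ω)` norm). -/
def supNorm {d : ℕ} (Ω : Set (Ed d)) (u : Ed d → ℝ) : ℝ :=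
  sSup ((fun x => |u x|) '' Ω)

/-- infimum of `u` over `Ω`. -/
def infOn {d : ℕ} (Ω : Set (Ed d)) (u : Ed d → ℝ) : ℝ := sInf (u '' Ω)

def h1Norm {d : ℕ} (Ω : Set (Ed d)) (u : Ed d → ℝ) : ℝ :=
  Real.sqrt (∫ x in Ω, (u x) ^ 2 + ‖grad u x‖ ^ 2)

def w1pNorm {d : ℕ} (Ω : Set (Ed d)) (p : ℝ) (u : Ed d → ℝ) : ℝ :=
  (∫ x in Ω, |u x| ^ p + ‖grad u x‖ ^ p) ^ (1 / p)

def w2pNorm {d : ℕ} (Ω : Set (Ed d)) (p : ℝ) (u : Ed d → ℝ) : ℝ :=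
  (∫ x in Ω, |u x| ^ p + ‖grad u x‖ ^ p + ‖iteratedFDeriv ℝ 2 u x‖ ^ p) ^ (1 / p)

def h2Norm {d : ℕ} (Ω : Set (Ed d)) (u : Ed d → ℝ) : ℝ := w2pNorm Ω 2 u

def MemLpOn {d : ℕ} (Ω : Set (Ed d)) (p : ℝ) (u : Ed d → ℝ) : Prop :=
  MemLp u (ENNReal.ofReal p) (volume.restrict Ω)

/-- membership in `H^1(Ω)` (classical-derivative model). -/
def MemH1 {d : ℕ} (Ω : Set (Ed d)) (u : Ed d → ℝ) : Prop :=
  DifferentiableOn ℝ u Ω ∧ MemLp u 2 (volume.restrict Ω) ∧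
    MemLp (grad u) 2 (volume.restrict Ω)

def MemW1p {d : ℕ} (Ω : Set (Ed d)) (p : ℝ) (u : Ed d → ℝ) : Prop :=
  DifferentiableOn ℝ u Ω ∧ MemLpOn Ω p u ∧
    MemLp (grad u) (ENNReal.ofReal p) (volume.restrict Ω)

def MemW2p {d : ℕ} (Ω : Set (Ed d)) (p : ℝ) (u : Ed d → ℝ) : Prop :=
  MemW1p Ω p u ∧
    MemLp (fun x => ‖iteratedFDeriv ℝ 2 u x‖) (ENNReal.ofReal p) (volume.restrict Ω)

def MemH2 {d : ℕ} (Ω : Set (Ed d)) (u : Ed d → ℝ) : Prop := MemW2p Ω 2 u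

/-- smooth compactly supported test function in `Ω`. -/
def IsTestFun {d : ℕ} (Ω : Set (Ed d)) (φ : Ed d → ℝ) : Prop :=
  ContDiff ℝ (⊤ : ℕ∞) φ ∧ HasCompactSupport φ ∧ tsupport φ ⊆ Ω

/-- membership in `H^1_0(Ω)`: in `H^1(Ω)` and approximable by test functions. -/
def MemH10 {d : ℕ} (Ω : Set (Ed d)) (u : Ed d → ℝ) : Prop :=
  MemH1 Ω u ∧ ∀ ε : ℝ, 0 < ε → ∃ φ, IsTestFun Ω φ ∧ h1Norm Ω (u - φ) < ε

/-- the bilinear form `a(u,v) = ∫ ∇u·∇v + (b·∇u) v` of the advection–diffusion operator. -/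
def aForm {d : ℕ} (Ω : Set (Ed d)) (b : Ed d → Ed d) (u v : Ed d → ℝ) : ℝ :=
  ∫ x in Ω, (inner ℝ (grad u x) (grad v x) : ℝ) + (inner ℝ (b x) (grad u x) : ℝ) * v x

/-- the adjoint bilinear form `a*(u,v) = ∫ (∇u + u b)·∇v`. -/
def aStar {d : ℕ} (Ω : Set (Ed d)) (b : Ed d → Ed d) (u v : Ed d → ℝ) : ℝ :=
  ∫ x in Ω, (inner ℝ (grad u x + u x • b x) (grad v x) : ℝ)

/-- the regularized adjoint bilinear form `a*_η(u,v) = a*(u,v) + η ∫ u v`. -/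
def aStarEta {d : ℕ} (Ω : Set (Ed d)) (b : Ed d → Ed d) (η : ℝ) (u v : Ed d → ℝ) : ℝ :=
  aStar Ω b u v + η * ∫ x in Ω, u x * v x

/-- `B = ∇σ + σ b`. -/
def Bvec {d : ℕ} (b : Ed d → Ed d) (σ : Ed d → ℝ) (x : Ed d) : Ed d :=
  grad σ x + σ x • b x

/-- the modified bilinear form `∫ σ ∇u·∇v + ((∇σ + bσ)·∇u) v`. -/
def aMod {d : ℕ} (Ω : Set (Ed d)) (b : Ed d → Ed d) (σ : Ed d → ℝ) (u v : Ed d → ℝ) : ℝ :=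
  ∫ x in Ω, σ x * (inner ℝ (grad u x) (grad v x) : ℝ) + (inner ℝ (Bvec b σ x) (grad u x) : ℝ) * v x

/-- the skew-symmetric bilinear form `a_ss(σ; u, v)`. -/
def aSS {d : ℕ} (Ω : Set (Ed d)) (b : Ed d → Ed d) (σ u v : Ed d → ℝ) : ℝ :=
  ∫ x in Ω, σ x * (inner ℝ (grad u x) (grad v x) : ℝ)
    + (inner ℝ (Bvec b σ x) (v x • grad u x - u x • grad v x) : ℝ) / 2

/-- (C1): `−div(∇σ + bσ) = 0` in `Ω` in the weak (distributional) sense. -/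
def SatisfiesC1 {d : ℕ} (Ω : Set (Ed d)) (b : Ed d → Ed d) (σ : Ed d → ℝ) : Prop :=
  ∀ φ, IsTestFun Ω φ → aStar Ω b σ φ = 0

/-- (C2): `inf_Ω σ > 0`. -/
def SatisfiesC2 {d : ℕ} (Ω : Set (Ed d)) (σ : Ed d → ℝ) : Prop :=
  ∃ c : ℝ, 0 < c ∧ ∀ x ∈ Ω, c ≤ σ x

/-- (C3): multiplication by `σ` is bounded on `H^1_0(Ω)` with constant `Cσ`. -/
def SatisfiesC3 {d : ℕ} (Ω : Set (Ed d)) (σ : Ed d → ℝ) (Cσ : ℝ) : Prop :=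
  ∀ u, MemH10 Ω u →
    MemH10 Ω (fun x => σ x * u x) ∧
      h1Norm Ω (fun x => σ x * u x) ≤ Cσ * h1Norm Ω u

/-- `F` is a linear functional (model for `f ∈ H^{-1}(Ω)`). -/
def IsLinearFunc {d : ℕ} (F : (Ed d → ℝ) → ℝ) : Prop :=
  (∀ u v, F (u + v) = F u + F v) ∧ ∀ (c : ℝ) (u), F (c • u) = c * F u

/-- `F` is bounded on `H^1_0(Ω)` with norm at most `M`. -/
def IsBoundedOnH10 {d : ℕ} (Ω : Set (Ed d)) (F : (Ed d → ℝ) → ℝ) (M : ℝ) : Prop :=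
  ∀ v, MemH10 Ω v → |F v| ≤ M * h1Norm Ω v

/-- `b` is Lipschitz on the closure of `Ω` with Lipschitz norm (sup + Lip seminorm) at most `L`. -/
def LipOn {d : ℕ} (Ω : Set (Ed d)) (b : Ed d → Ed d) (L : ℝ) : Prop :=
  0 ≤ L ∧ LipschitzOnWith L.toNNReal b (closure Ω) ∧ ∀ x ∈ closure Ω, ‖b x‖ ≤ L

/-- the first invariant measure `σ1`: weak solution of the homogeneous Neumann adjoint
problem, with mean one and positive lower bound. -/
def IsInvMeas1 {d : ℕ} (Ω : Set (Ed d)) (b : Ed d → Ed d) (σ : Ed d → ℝ) : Prop :=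
  MemH1 Ω σ ∧ (∀ v, MemH1 Ω v → aStar Ω b σ v = 0) ∧ (⨍ x in Ω, σ x) = 1 ∧ SatisfiesC2 Ω σ

/-- invariant measure with boundary flux `g` (w.r.t. the surface measure `μB`) and mean one. -/
def IsInvMeasG {d : ℕ} (Ω : Set (Ed d)) (b : Ed d → Ed d) (μB : Measure (Ed d))
    (g σ : Ed d → ℝ) : Prop :=
  MemH1 Ω σ ∧ (∀ v, MemH1 Ω v → aStar Ω b σ v = ∫ x, g x * v x ∂μB) ∧ (⨍ x in Ω, σ x) = 1

/-- the boundary datum `g = b·n − ⨍_{∂Ω} b·n` (with `ν` the outward normal and `μB` the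
surface measure on `∂Ω`). -/
def gbn {d : ℕ} (b ν : Ed d → Ed d) (μB : Measure (Ed d)) : Ed d → ℝ :=
  fun x => (inner ℝ (b x) (ν x) : ℝ) - ⨍ y, (inner ℝ (b y) (ν y) : ℝ) ∂μB

/-- surrogate for the boundary Sobolev norms `W^{1−1/p,p}(∂Ω)` / `H^{1/2}(∂Ω)`. -/
def boundaryW1p {d : ℕ} (μB : Measure (Ed d)) (p : ℝ) (g : Ed d → ℝ) : ℝ :=
  (∫ x, |g x| ^ p ∂μB) ^ (1 / p) + (∫ x, ‖grad g x‖ ^ p ∂μB) ^ (1 / p)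

/-- admissible exponents: `1 < p < ∞` if `d = 2`, `2d/(d+2) ≤ p < ∞` if `d ≥ 3`. -/
def pAdmissible (d : ℕ) (p : ℝ) : Prop :=
  (d = 2 ∧ 1 < p) ∨ (3 ≤ d ∧ (2 * d : ℝ) / (d + 2) ≤ p)

/-- `|||σ|||_p = ‖σ‖_{L^∞} + ‖∇σ + bσ‖_{L^p}`. -/
def tripleNorm {d : ℕ} (Ω : Set (Ed d)) (b : Ed d → Ed d) (p : ℝ) (σ : Ed d → ℝ) : ℝ :=
  supNorm Ω σ + lpNormV Ω p (Bvec b σ)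

/-- abstract model of the family of `ℙ¹` finite element spaces on regular quasi-uniform
meshes of size `h`: subspaces of `H^1(Ω)` containing the constants and enjoying the
standard interpolation estimates. -/
def IsFEFamily {d : ℕ} (Ω : Set (Ed d)) (S : ℝ → Set (Ed d → ℝ)) : Prop :=
  ∃ CI : ℝ, 0 < CI ∧ ∀ h : ℝ, 0 < h →
    ((fun _ => (1 : ℝ)) ∈ S h) ∧
    (∀ u ∈ S h, MemH1 Ω u) ∧
    (∀ u ∈ S h, ∀ v ∈ S h, u + v ∈ S h) ∧
    (∀ (c : ℝ), ∀ u ∈ S h, c • u ∈ S h) ∧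
    (∀ u, MemH2 Ω u → ∃ v ∈ S h, h1Norm Ω (u - v) ≤ CI * h * h2Norm Ω u) ∧
    (∀ p : ℝ, 2 ≤ p → ∀ u, MemW2p Ω p u → ∃ v ∈ S h, w1pNorm Ω p (u - v) ≤ CI * h * w2pNorm Ω p u)

/-- the elliptic regularity and well-posedness conclusions for the invariant measures:
existence, uniqueness, positivity and `W^{2,p}` regularity of `σ1`, together with the
stability estimate for the adjoint Neumann problem. -/
def RegularityPackage {d : ℕ} (Ω : Set (Ed d)) (b : Ed d → Ed d) : Prop :=
  (∃ σ, IsInvMeas1 Ω b σ ∧ (∀ p : ℝ, 1 < p → MemW2p Ω p σ) ∧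
    ∀ σ', IsInvMeas1 Ω b σ' → Set.EqOn σ' σ Ω) ∧
  (∀ p : ℝ, pAdmissible d p → ∃ C : ℝ, 0 < C ∧ ∀ f, MemLpOn Ω p f → (∫ x in Ω, f x) = 0 →
    ∃ v, MemH1 Ω v ∧ (∀ φ, MemH1 Ω φ → aStar Ω b v φ = ∫ x in Ω, f x * φ x) ∧
      (⨍ x in Ω, v x) = 1 ∧ MemW2p Ω p v ∧
      ∀ σ, IsInvMeas1 Ω b σ → w2pNorm Ω p (v - σ) ≤ C * lpNorm Ω p f)


/-! ### Auxiliary lemmas -/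

section Aux

variable {d : ℕ}

lemma inner_grad_eq (f : Ed d → ℝ) (x y : Ed d) :
    (inner ℝ (grad f x) y : ℝ) = fderiv ℝ f x y := by
  simp only [grad, gradient]
  exact InnerProductSpace.toDual_symm_apply

lemma grad_eq_symm_fderiv (f : Ed d → ℝ) (x : Ed d) :
    grad f x = (InnerProductSpace.toDual ℝ (Ed d)).symm (fderiv ℝ f x) := rfl

lemma grad_eq_of_hasFDerivAt {f : Ed d → ℝ} {x : Ed d} {L : Ed d →L[ℝ] ℝ}
    (h : HasFDerivAt f L x) :
    grad f x = (InnerProductSpace.toDual ℝ (Ed d)).symm L := by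
  simp only [grad, gradient]; rw [h.fderiv]

lemma aesm_grad (f : Ed d → ℝ) (μ : Measure (Ed d)) :
    AEStronglyMeasurable (grad f) μ := by
  have h := measurable_fderiv ℝ (E := Ed d) f
  exact (((InnerProductSpace.toDual ℝ (Ed d)).symm.continuous.measurable).comp
    h).aestronglyMeasurable

lemma eqOn_grad {Ω : Set (Ed d)} (hop : IsOpen Ω) {f g : Ed d → ℝ} (h : Set.EqOn f g Ω) :
    ∀ x ∈ Ω, grad f x = grad g x := by
  intro x hx
  simp only [grad, gradient]
  rw [Filter.EventuallyEq.fderiv_eq (h.eventuallyEq_of_mem (hop.mem_nhds hx))]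

lemma memH1_congr_eqOn {Ω : Set (Ed d)} (hop : IsOpen Ω) {f g : Ed d → ℝ}
    (hf : MemH1 Ω f) (h : Set.EqOn f g Ω) : MemH1 Ω g := by
  have hae : f =ᵐ[volume.restrict Ω] g :=
    (ae_restrict_iff' hop.measurableSet).2 (Filter.Eventually.of_forall h)
  refine ⟨?_, hf.2.1.ae_eq hae, ?_⟩
  · intro x hx
    have h1 : DifferentiableAt ℝ f x := (hf.1 x hx).differentiableAt (hop.mem_nhds hx)
    exact ((h.eventuallyEq_of_mem (hop.mem_nhds hx)).differentiableAt_iff.1 h1).differentiableWithinAt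
  · refine hf.2.2.ae_eq ?_
    refine (ae_restrict_iff' hop.measurableSet).2 (Filter.Eventually.of_forall fun x hx => ?_)
    exact eqOn_grad hop h x hx

lemma memH1_sub {Ω : Set (Ed d)} (hop : IsOpen Ω) {f g : Ed d → ℝ}
    (hf : MemH1 Ω f) (hg : MemH1 Ω g) : MemH1 Ω (fun x => f x - g x) := by
  refine ⟨hf.1.sub hg.1, hf.2.1.sub hg.2.1, ?_⟩
  refine ((hf.2.2.sub hg.2.2).ae_eq ?_)
  refine (ae_restrict_iff' hop.measurableSet).2 (Filter.Eventually.of_forall fun x hx => ?_)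
  have hfx : DifferentiableAt ℝ f x := (hf.1 x hx).differentiableAt (hop.mem_nhds hx)
  have hgx : DifferentiableAt ℝ g x := (hg.1 x hx).differentiableAt (hop.mem_nhds hx)
  show grad f x - grad g x = grad (fun y => f y - g y) x
  rw [grad_eq_of_hasFDerivAt (f := fun y => f y - g y) (hfx.hasFDerivAt.sub hgx.hasFDerivAt), map_sub]
  rfl

lemma memL2_B {Ω : Set (Ed d)} (hop : IsOpen Ω) {b : Ed d → Ed d} {L : ℝ} (hb : LipOn Ω b L)
    {u : Ed d → ℝ} (hu : MemH1 Ω u) :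
    MemLp (fun x => grad u x + u x • b x) 2 (volume.restrict Ω) := by
  have hbc : ContinuousOn b Ω := hb.2.1.continuousOn.mono subset_closure
  have haesm : AEStronglyMeasurable (fun x => u x • b x) (volume.restrict Ω) :=
    hu.2.1.aestronglyMeasurable.smul (hbc.aestronglyMeasurable hop.measurableSet)
  have hmem : MemLp (fun x => u x • b x) 2 (volume.restrict Ω) := by
    refine MemLp.mono' (hu.2.1.norm.const_mul L) haesm ?_
    refine (ae_restrict_iff' hop.measurableSet).2 (Filter.Eventually.of_forall fun x hx => ?_)
    rw [norm_smul]
    calc ‖u x‖ * ‖b x‖ ≤ ‖u x‖ * L :=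
          mul_le_mul_of_nonneg_left (hb.2.2 x (subset_closure hx)) (norm_nonneg _)
      _ = L * ‖u x‖ := mul_comm _ _
  exact hu.2.2.add hmem

lemma integrable_inner2 {α : Type*} [MeasurableSpace α] {μ : Measure α} {E : Type*}
    [NormedAddCommGroup E] [InnerProductSpace ℝ E] {f g : α → E}
    (hf : MemLp f 2 μ) (hg : MemLp g 2 μ) :
    Integrable (fun x => (inner ℝ (f x) (g x) : ℝ)) μ := by
  have h := L2.integrable_inner (𝕜 := ℝ) (hf.toLp f) (hg.toLp g)
  apply h.congr
  filter_upwards [hf.coeFn_toLp, hg.coeFn_toLp] with x hx hy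
  rw [hx, hy]

lemma integrableOn_aStar_integrand {Ω : Set (Ed d)} (hop : IsOpen Ω) {b : Ed d → Ed d} {L : ℝ}
    (hb : LipOn Ω b L) {u v : Ed d → ℝ} (hu : MemH1 Ω u) (hv : MemH1 Ω v) :
    IntegrableOn (fun x => (inner ℝ (grad u x + u x • b x) (grad v x) : ℝ)) Ω volume :=
  integrable_inner2 (memL2_B hop hb hu) hv.2.2

/-- 1D FTC step: a function differentiable on `[0,1]` with a.e. vanishing derivative
has equal endpoint values. -/
lemma ftc_const {f f' : ℝ → ℝ}
    (hder : ∀ t ∈ Set.uIcc (0:ℝ) 1, HasDerivAt f (f' t) t)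
    (hae : ∀ᵐ t : ℝ, t ∈ Set.uIoc (0:ℝ) 1 → f' t = 0) : f 1 = f 0 := by
  have hint : IntervalIntegrable f' volume 0 1 := by
    rw [intervalIntegrable_iff]
    refine (integrable_zero _ _ _).congr ?_
    refine (ae_restrict_iff' measurableSet_uIoc).2 ?_
    filter_upwards [hae] with t ht htm
    exact (ht htm).symm
  have h1 := intervalIntegral.integral_eq_sub_of_hasDerivAt hder hint
  have h2 : ∫ t in (0:ℝ)..1, f' t = ∫ t in (0:ℝ)..1, (0:ℝ) :=
    intervalIntegral.integral_congr_ae (by filter_upwards [hae] with t ht htm; exact ht htm)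
  rw [h2, intervalIntegral.integral_zero] at h1
  linarith

/-- On a ball contained in `Ω`, a function differentiable on `Ω` whose differential vanishes
a.e. takes the same value as at the center. -/
lemma ball_const_of_fderiv_ae_zero {Ω : Set (Ed d)} (hop : IsOpen Ω) {θ : Ed d → ℝ}
    (hdiff : ∀ x ∈ Ω, DifferentiableAt ℝ θ x)
    (hae : volume {z | z ∈ Ω ∧ fderiv ℝ θ z ≠ 0} = 0)
    {x : Ed d} {r : ℝ} (hball : Metric.ball x r ⊆ Ω) :
    ∀ y ∈ Metric.ball x r, θ y = θ x := by
  set N : Set (Ed d) := {z | z ∈ Ω ∧ fderiv ℝ θ z ≠ 0} with hN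
  have hNmeas : MeasurableSet N := by
    have h1 : MeasurableSet ((fderiv ℝ θ) ⁻¹' {0}ᶜ) :=
      measurable_fderiv ℝ θ (measurableSet_singleton 0).compl
    have : N = Ω ∩ (fderiv ℝ θ) ⁻¹' {0}ᶜ := by
      ext z; simp [hN, Set.mem_setOf_eq, Set.mem_inter_iff]
    rw [this]; exact hop.measurableSet.inter h1
  set S : Set (ℝ × Ed d) := {p | p.1 ∈ Set.Icc (0:ℝ) 1 ∧ x + p.1 • (p.2 - x) ∈ N} with hS
  have hφ : Measurable (fun p : ℝ × Ed d => x + p.1 • (p.2 - x)) := by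
    apply Continuous.measurable; fun_prop
  have hSmeas : MeasurableSet S := by
    have : S = (Prod.fst ⁻¹' Set.Icc (0:ℝ) 1) ∩
        ((fun p : ℝ × Ed d => x + p.1 • (p.2 - x)) ⁻¹' N) := by
      ext p; simp [hS, Set.mem_setOf_eq]
    rw [this]
    exact (measurable_fst measurableSet_Icc).inter (hφ hNmeas)
  have hS0 : (volume.prod volume) S = 0 := by
    rw [Measure.prod_apply hSmeas]
    have hslice : ∀ᵐ t : ℝ, volume (Prod.mk t ⁻¹' S) = 0 := by
      have hne : ∀ᵐ t : ℝ, t ≠ (0:ℝ) := by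
        rw [ae_iff]
        have : {t : ℝ | ¬ t ≠ 0} = {0} := by ext t; simp
        rw [this]; exact measure_singleton 0
      filter_upwards [hne] with t ht
      by_cases htm : t ∈ Set.Icc (0:ℝ) 1
      · have hpre : Prod.mk t ⁻¹' S = (fun y : Ed d => x + t • (y - x)) ⁻¹' N := by
          ext y
          exact ⟨fun h => h.2, fun h => ⟨htm, h⟩⟩
        rw [hpre]
        have hcomp : (fun y : Ed d => x + t • (y - x)) =
            (fun z : Ed d => (x - t • x) + z) ∘ (fun y : Ed d => t • y) := by
          funext y; simp [Function.comp, smul_sub]; abel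
        rw [hcomp, Set.preimage_comp]
        rw [Measure.addHaar_preimage_smul _ ht]
        rw [measure_preimage_add]
        rw [hae, mul_zero]
      · have hpre : Prod.mk t ⁻¹' S = ∅ :=
          Set.eq_empty_iff_forall_notMem.2 fun y hy => htm hy.1
        rw [hpre]; exact measure_empty
    rw [lintegral_congr_ae hslice, lintegral_zero]
  have hswap : ((volume : Measure (Ed d)).prod (volume : Measure ℝ)) (Prod.swap ⁻¹' S) = 0 := by
    have hps := Measure.prod_swap (μ := (volume : Measure ℝ)) (ν := (volume : Measure (Ed d)))
    have hmeas2 : MeasurableSet (Prod.swap ⁻¹' S : Set (Ed d × ℝ)) :=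
      measurable_swap hSmeas
    calc ((volume : Measure (Ed d)).prod (volume : Measure ℝ)) (Prod.swap ⁻¹' S)
        = (Measure.map Prod.swap ((volume : Measure ℝ).prod (volume : Measure (Ed d))))
            (Prod.swap ⁻¹' S) := by rw [hps]
      _ = ((volume : Measure ℝ).prod (volume : Measure (Ed d)))
            (Prod.swap ⁻¹' (Prod.swap ⁻¹' S)) := Measure.map_apply measurable_swap hmeas2
      _ = ((volume : Measure ℝ).prod (volume : Measure (Ed d))) S := by
            have hss : Prod.swap ⁻¹' (Prod.swap ⁻¹' S : Set (Ed d × ℝ)) = S := by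
              ext p; rfl
            rw [hss]
      _ = 0 := hS0
  have hae2 : ∀ᵐ y ∂(volume : Measure (Ed d)), ∀ᵐ t ∂(volume : Measure ℝ), (t, y) ∉ S := by
    have h := measure_eq_zero_iff_ae_notMem.mp hswap
    exact Measure.ae_ae_of_ae_prod h
  have hgood : ∀ᵐ y ∂(volume : Measure (Ed d)), y ∈ Metric.ball x r → θ y = θ x := by
    filter_upwards [hae2] with y hy hyb
    have hseg : ∀ t ∈ Set.Icc (0:ℝ) 1, x + t • (y - x) ∈ Metric.ball x r := by
      intro t htm
      rw [Metric.mem_ball, dist_eq_norm]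
      have : x + t • (y - x) - x = t • (y - x) := by abel
      rw [this, norm_smul]
      have hyx : ‖y - x‖ < r := by
        rw [Metric.mem_ball, dist_eq_norm] at hyb; exact hyb
      have ht1 : ‖t‖ ≤ 1 := by
        rw [Real.norm_eq_abs, abs_of_nonneg htm.1]; exact htm.2
      calc ‖t‖ * ‖y - x‖ ≤ 1 * ‖y - x‖ :=
            mul_le_mul_of_nonneg_right ht1 (norm_nonneg _)
        _ = ‖y - x‖ := one_mul _
        _ < r := hyx
    set γ : ℝ → Ed d := fun s => x + s • (y - x) with hγ
    set f' : ℝ → ℝ := fun t => fderiv ℝ θ (γ t) (y - x) with hf'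
    have hder : ∀ t ∈ Set.uIcc (0:ℝ) 1, HasDerivAt (fun s => θ (γ s)) (f' t) t := by
      intro t htm
      rw [Set.uIcc_of_le zero_le_one] at htm
      have hz : γ t ∈ Ω := hball (hseg t htm)
      have hγd : HasDerivAt γ (y - x) t := by
        have h := ((hasDerivAt_id' t).smul_const (y - x)).const_add x; rwa [one_smul] at h
      exact ((hdiff _ hz).hasFDerivAt).comp_hasDerivAt t hγd
    have hae3 : ∀ᵐ t : ℝ, t ∈ Set.uIoc (0:ℝ) 1 → f' t = 0 := by
      filter_upwards [hy] with t ht htm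
      have hticc : t ∈ Set.Icc (0:ℝ) 1 := by
        rw [Set.uIoc_of_le zero_le_one] at htm
        exact ⟨htm.1.le, htm.2⟩
      have hz : γ t ∈ Ω := hball (hseg t hticc)
      have : γ t ∉ N := fun hNmem => ht ⟨hticc, hNmem⟩
      have h0 : fderiv ℝ θ (γ t) = 0 := by
        by_contra hc
        exact this ⟨hz, hc⟩
      simp [hf', h0]
    have := ftc_const hder hae3
    simpa [hγ] using this
  intro y hyb
  by_contra hne
  have hcont : ContinuousAt θ y := (hdiff y (hball hyb)).continuousAt
  have hεpos : 0 < |θ y - θ x| := by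
    rw [abs_pos]; exact sub_ne_zero.2 hne
  obtain ⟨δ₁, hδ₁pos, hδ₁⟩ := Metric.continuousAt_iff.1 hcont _ hεpos
  have hrd : 0 < r - dist y x := by
    rw [Metric.mem_ball] at hyb; linarith
  set δ := min δ₁ (r - dist y x) with hδdef
  have hδpos : 0 < δ := lt_min hδ₁pos hrd
  have hsub : Metric.ball y δ ⊆ Metric.ball x r := by
    intro z hz
    rw [Metric.mem_ball] at hz ⊢
    calc dist z x ≤ dist z y + dist y x := dist_triangle _ _ _
      _ < δ + dist y x := by linarith
      _ ≤ (r - dist y x) + dist y x := by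
            have := min_le_right δ₁ (r - dist y x); linarith
      _ = r := by ring
  have hballne : ∀ z ∈ Metric.ball y δ, θ z ≠ θ x := by
    intro z hz
    have hdz : dist z y < δ₁ := lt_of_lt_of_le (Metric.mem_ball.1 hz) (min_le_left _ _)
    have := hδ₁ hdz
    intro hzx
    rw [hzx] at this
    rw [dist_eq_norm, ← abs_sub_comm] at this
    simp only [Real.norm_eq_abs] at this
    rw [abs_sub_comm] at this
    exact absurd this (lt_irrefl _)
  have hzero : volume {y' : Ed d | ¬ (y' ∈ Metric.ball x r → θ y' = θ x)} = 0 := by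
    rw [← ae_iff]; exact hgood
  have hsub2 : Metric.ball y δ ⊆ {y' : Ed d | ¬ (y' ∈ Metric.ball x r → θ y' = θ x)} := by
    intro z hz
    intro himp
    exact hballne z hz (himp (hsub hz))
  have := measure_mono_null hsub2 hzero
  exact absurd this (Metric.measure_ball_pos volume y hδpos).ne'

/-- A function differentiable on a preconnected open set with a.e. vanishing differential
is constant there. -/
lemma const_of_fderiv_ae_zero {Ω : Set (Ed d)} (hop : IsOpen Ω) (hconn : IsPreconnected Ω)
    {θ : Ed d → ℝ} (hdiff : ∀ x ∈ Ω, DifferentiableAt ℝ θ x)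
    (hae : volume {z | z ∈ Ω ∧ fderiv ℝ θ z ≠ 0} = 0)
    {x₀ : Ed d} (hx₀ : x₀ ∈ Ω) : ∀ x ∈ Ω, θ x = θ x₀ := by
  have hloc : ∀ x ∈ Ω, ∃ r > 0, Metric.ball x r ⊆ Ω ∧ ∀ y ∈ Metric.ball x r, θ y = θ x := by
    intro x hx
    obtain ⟨r, hr, hball⟩ := Metric.isOpen_iff.1 hop x hx
    exact ⟨r, hr, hball, ball_const_of_fderiv_ae_zero hop hdiff hae hball⟩
  classical
  choose! rr hrpos hrsub hrconst using hloc
  set U : Set (Ed d) := ⋃ (x : Ed d) (_ : x ∈ Ω ∧ θ x = θ x₀), Metric.ball x (rr x) with hU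
  set V : Set (Ed d) := ⋃ (x : Ed d) (_ : x ∈ Ω ∧ θ x ≠ θ x₀), Metric.ball x (rr x) with hV
  have hUopen : IsOpen U := isOpen_iUnion fun x => isOpen_iUnion fun _ => Metric.isOpen_ball
  have hVopen : IsOpen V := isOpen_iUnion fun x => isOpen_iUnion fun _ => Metric.isOpen_ball
  have hcover : Ω ⊆ U ∪ V := by
    intro x hx
    by_cases hθ : θ x = θ x₀
    · left; exact Set.mem_iUnion₂.2 ⟨x, ⟨hx, hθ⟩, Metric.mem_ball_self (hrpos x hx)⟩
    · right; exact Set.mem_iUnion₂.2 ⟨x, ⟨hx, hθ⟩, Metric.mem_ball_self (hrpos x hx)⟩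
  have hUne : (Ω ∩ U).Nonempty :=
    ⟨x₀, hx₀, Set.mem_iUnion₂.2 ⟨x₀, ⟨hx₀, rfl⟩, Metric.mem_ball_self (hrpos x₀ hx₀)⟩⟩
  have hdisj : Ω ∩ (U ∩ V) = ∅ := by
    rw [Set.eq_empty_iff_forall_notMem]
    rintro z ⟨hzΩ, hzU, hzV⟩
    obtain ⟨a, ⟨haΩ, haθ⟩, hza⟩ := Set.mem_iUnion₂.1 hzU
    obtain ⟨a', ⟨ha'Ω, ha'θ⟩, hza'⟩ := Set.mem_iUnion₂.1 hzV
    have h1 : θ z = θ a := hrconst a haΩ z hza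
    have h2 : θ z = θ a' := hrconst a' ha'Ω z hza'
    exact ha'θ (by rw [← h2, h1, haθ])
  intro x hx
  by_contra hne
  have hVne : (Ω ∩ V).Nonempty :=
    ⟨x, hx, Set.mem_iUnion₂.2 ⟨x, ⟨hx, hne⟩, Metric.mem_ball_self (hrpos x hx)⟩⟩
  obtain ⟨z, hz⟩ := hconn U V hUopen hVopen hcover hUne hVne
  rw [Set.eq_empty_iff_forall_notMem] at hdisj
  exact hdisj z ⟨hz.1, hz.2⟩

end Aux

set_option maxHeartbeats 2000000 in
/-- Corollary 2.10. With `σ2^0` the mean-one invariant measure with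
inhomogeneous Neumann flux `g = b·n − ⨍_{∂Ω} b·n` and `σ1` the first (positive, mean-one)
invariant measure, the set of solutions `σ ∈ H^1(Ω)` of `−div(∇σ + bσ) = 0` in `Ω`,
`(∇σ + bσ)·n = g` on `∂Ω`, `inf_Ω σ > 0`, is exactly
`{σ2^0 + κ σ1 : κ ∈ ℝ with inf_Ω (σ2^0 + κ σ1) > 0}`. -/
theorem statement7
    (d : ℕ) (hd : 2 ≤ d) (Ω : Set (Ed d)) (hΩ : IsCkDomain 2 Ω) (hconn : IsConnected Ω)
    (μB : Measure (Ed d)) (hμB : μB (frontier Ω)ᶜ = 0) (ν : Ed d → Ed d)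
    (b : Ed d → Ed d) (L : ℝ) (hb : LipOn Ω b L)
    (σ1 : Ed d → ℝ) (hσ1 : IsInvMeas1 Ω b σ1)
    (σ20 : Ed d → ℝ) (hσ20 : IsInvMeasG Ω b μB (gbn b ν μB) σ20) :
    ∀ σ : Ed d → ℝ,
      (MemH1 Ω σ ∧
        (∀ v, MemH1 Ω v → aStar Ω b σ v = ∫ x, gbn b ν μB x * v x ∂μB) ∧
        SatisfiesC2 Ω σ)
      ↔ ∃ κ : ℝ, Set.EqOn σ (fun x => σ20 x + κ * σ1 x) Ω ∧
          SatisfiesC2 Ω (fun x => σ20 x + κ * σ1 x) := by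
  obtain ⟨hop, hbdd, hne, -⟩ := hΩ
  have hΩmeas : MeasurableSet Ω := hop.measurableSet
  haveI hfin : IsFiniteMeasure (volume.restrict Ω) := by
    constructor
    rw [Measure.restrict_apply_univ]
    obtain ⟨R, hR⟩ := hbdd.subset_closedBall 0
    exact lt_of_le_of_lt (measure_mono hR) measure_closedBall_lt_top
  obtain ⟨hσ1H1, hσ1weak, hσ1mean, c₁, hc₁pos, hc₁le⟩ := hσ1
  obtain ⟨hσ20H1, hσ20weak, hσ20mean⟩ := hσ20
  intro σ
  classical
  constructor
  · rintro ⟨hσH1, hσweak, cσ, hcσpos, hcσle⟩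
    -- the difference `w` and the quotient `θf`
    set w : Ed d → ℝ := fun x => σ x - σ20 x with hw
    have hwH1 : MemH1 Ω w := memH1_sub hop hσH1 hσ20H1
    set θf : Ed d → ℝ := fun x => w x * (σ1 x)⁻¹ with hθf
    have hσ1pos : ∀ x ∈ Ω, 0 < σ1 x := fun x hx => lt_of_lt_of_le hc₁pos (hc₁le x hx)
    have hσ1ne : ∀ x ∈ Ω, σ1 x ≠ 0 := fun x hx => (hσ1pos x hx).ne'
    have hwdiff : ∀ x ∈ Ω, DifferentiableAt ℝ w x :=
      fun x hx => (hwH1.1 x hx).differentiableAt (hop.mem_nhds hx)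
    have hσ1diff : ∀ x ∈ Ω, DifferentiableAt ℝ σ1 x :=
      fun x hx => (hσ1H1.1 x hx).differentiableAt (hop.mem_nhds hx)
    have hθfder : ∀ x ∈ Ω, HasFDerivAt θf
        (w x • ((-(σ1 x ^ 2)⁻¹) • fderiv ℝ σ1 x) + (σ1 x)⁻¹ • fderiv ℝ w x) x := by
      intro x hx
      have hinv : HasFDerivAt (fun y => (σ1 y)⁻¹) ((-(σ1 x ^ 2)⁻¹) • fderiv ℝ σ1 x) x :=
        (hasDerivAt_inv (hσ1ne x hx)).comp_hasFDerivAt x (hσ1diff x hx).hasFDerivAt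
      exact (hwdiff x hx).hasFDerivAt.mul hinv
    have hGθ : ∀ x ∈ Ω, grad θf x =
        (w x * (-(σ1 x ^ 2)⁻¹)) • grad σ1 x + (σ1 x)⁻¹ • grad w x := by
      intro x hx
      have h1 := grad_eq_of_hasFDerivAt (hθfder x hx)
      rw [map_add, _root_.map_smul, _root_.map_smul, _root_.map_smul] at h1
      rw [h1, ← grad_eq_symm_fderiv, ← grad_eq_symm_fderiv, smul_smul]
    have hGw : ∀ x ∈ Ω, grad w x = σ1 x • grad θf x + θf x • grad σ1 x := by
      intro x hx
      have hs := hσ1ne x hx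
      rw [hGθ x hx, smul_add, smul_smul, smul_smul]
      have e1 : σ1 x * (w x * (-(σ1 x ^ 2)⁻¹)) = -(θf x) := by
        simp only [hθf]
        field_simp
      have e2 : σ1 x * (σ1 x)⁻¹ = 1 := mul_inv_cancel₀ hs
      rw [e1, e2, one_smul]
      module
    -- the two test functions
    set v₁ : Ed d → ℝ := fun y => if y ∈ Ω then arctan (θf y) else 0 with hv₁def
    set v₂ : Ed d → ℝ := fun y => if y ∈ Ω then log (1 + θf y ^ 2) / 2 else 0 with hv₂def
    have hv₁der : ∀ x ∈ Ω, HasFDerivAt v₁ ((1 / (1 + θf x ^ 2)) • fderiv ℝ θf x) x := by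
      intro x hx
      have h1 : HasFDerivAt (fun y => arctan (θf y)) ((1 / (1 + θf x ^ 2)) • fderiv ℝ θf x) x :=
        (hasDerivAt_arctan (θf x)).comp_hasFDerivAt x (hθfder x hx).differentiableAt.hasFDerivAt
      refine h1.congr_of_eventuallyEq ?_
      filter_upwards [hop.mem_nhds hx] with y hy
      simp [hv₁def, hy]
    have hv₂der : ∀ x ∈ Ω, HasFDerivAt v₂ ((θf x / (1 + θf x ^ 2)) • fderiv ℝ θf x) x := by
      intro x hx
      have hpos : (0:ℝ) < 1 + θf x ^ 2 := by positivity
      have hlog : HasDerivAt (fun t : ℝ => log (1 + t ^ 2) / 2) (θf x / (1 + θf x ^ 2)) (θf x) := by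
        have h2 : HasDerivAt (fun t : ℝ => 1 + t ^ 2) ((2:ℕ) * θf x ^ (2 - 1)) (θf x) :=
          (hasDerivAt_pow 2 (θf x)).const_add 1
        have h3 := (h2.log hpos.ne').div_const 2
        exact h3.congr_deriv (by norm_num <;> ring)
      have h1 := hlog.comp_hasFDerivAt x (hθfder x hx).differentiableAt.hasFDerivAt
      refine h1.congr_of_eventuallyEq ?_
      filter_upwards [hop.mem_nhds hx] with y hy
      simp [hv₂def, hy]
    have hgradv₁ : ∀ x ∈ Ω, grad v₁ x = (1 / (1 + θf x ^ 2)) • grad θf x := by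
      intro x hx
      rw [grad_eq_of_hasFDerivAt (hv₁der x hx), _root_.map_smul, ← grad_eq_symm_fderiv]
    have hgradv₂ : ∀ x ∈ Ω, grad v₂ x = (θf x / (1 + θf x ^ 2)) • grad θf x := by
      intro x hx
      rw [grad_eq_of_hasFDerivAt (hv₂der x hx), _root_.map_smul, ← grad_eq_symm_fderiv]
    -- measurability of θf
    have haesmθ : AEStronglyMeasurable θf (volume.restrict Ω) :=
      ((hσH1.2.1.aestronglyMeasurable.sub hσ20H1.2.1.aestronglyMeasurable).aemeasurable.mul
        hσ1H1.2.1.aestronglyMeasurable.aemeasurable.inv).aestronglyMeasurable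
    have hv₁ae : v₁ =ᵐ[volume.restrict Ω] fun y => arctan (θf y) :=
      (ae_restrict_iff' hΩmeas).2 (Filter.Eventually.of_forall fun y hy => by simp [hv₁def, hy])
    have hv₂ae : v₂ =ᵐ[volume.restrict Ω] fun y => log (1 + θf y ^ 2) / 2 :=
      (ae_restrict_iff' hΩmeas).2 (Filter.Eventually.of_forall fun y hy => by simp [hv₂def, hy])
    have haesmv₁ : AEStronglyMeasurable v₁ (volume.restrict Ω) :=
      (Real.continuous_arctan.comp_aestronglyMeasurable haesmθ).congr hv₁ae.symm
    have haesmv₂ : AEStronglyMeasurable v₂ (volume.restrict Ω) := by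
      have hcont : Continuous fun t : ℝ => log (1 + t ^ 2) / 2 := by
        have h : Continuous fun t : ℝ => (1 + t ^ 2 : ℝ) := continuous_const.add (continuous_pow 2)
        exact (h.log fun t => by positivity).div_const 2
      exact (hcont.comp_aestronglyMeasurable haesmθ).congr hv₂ae.symm
    -- MemLp of the test functions
    have hmemv₁ : MemLp v₁ 2 (volume.restrict Ω) := by
      refine MemLp.of_bound haesmv₁ (π / 2) (Filter.Eventually.of_forall fun y => ?_)
      by_cases hy : y ∈ Ω
      · simp only [hv₁def, if_pos hy, Real.norm_eq_abs]
        exact abs_le.2 ⟨(neg_pi_div_two_lt_arctan _).le, (arctan_lt_pi_div_two _).le⟩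
      · simp only [hv₁def, if_neg hy, norm_zero]
        positivity
    have hlogbound : ∀ t : ℝ, |log (1 + t ^ 2) / 2| ≤ |t| := by
      intro t
      have h1 : (0:ℝ) ≤ log (1 + t ^ 2) := log_nonneg (by nlinarith [sq_nonneg t])
      have h3 : |t| + 1 ≤ exp |t| := add_one_le_exp _
      have h4 : 1 + t ^ 2 ≤ (|t| + 1) ^ 2 := by nlinarith [abs_nonneg t, sq_abs t]
      have h5 : (|t| + 1) ^ 2 ≤ exp |t| ^ 2 :=
        pow_le_pow_left₀ (by positivity) h3 2
      have h6 : exp |t| ^ 2 = exp (2 * |t|) := by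
        rw [sq, ← Real.exp_add]; ring_nf
      have h7 : log (1 + t ^ 2) ≤ 2 * |t| := by
        rw [Real.log_le_iff_le_exp (by positivity)]
        calc (1 + t ^ 2 : ℝ) ≤ (|t| + 1) ^ 2 := h4
          _ ≤ exp |t| ^ 2 := h5
          _ = exp (2 * |t|) := h6
      rw [abs_div, abs_of_nonneg h1]
      have : |(2:ℝ)| = 2 := by norm_num
      rw [this]
      linarith
    have hmemv₂ : MemLp v₂ 2 (volume.restrict Ω) := by
      refine MemLp.mono' ((hσH1.2.1.norm.add hσ20H1.2.1.norm).const_mul c₁⁻¹) haesmv₂ ?_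
      refine (ae_restrict_iff' hΩmeas).2 (Filter.Eventually.of_forall fun y hy => ?_)
      have hs := hσ1pos y hy
      have hti : |θf y| ≤ c₁⁻¹ * (‖σ y‖ + ‖σ20 y‖) := by
        have h1 : |θf y| = |w y| * (σ1 y)⁻¹ := by
          simp only [hθf]
          rw [abs_mul, abs_inv, abs_of_pos hs]
        have h2 : (σ1 y)⁻¹ ≤ c₁⁻¹ := inv_anti₀ hc₁pos (hc₁le y hy)
        have h3 : |w y| ≤ ‖σ y‖ + ‖σ20 y‖ := by
          simp only [hw, Real.norm_eq_abs]
          exact (abs_sub _ _)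
        calc |θf y| = |w y| * (σ1 y)⁻¹ := h1
          _ ≤ (‖σ y‖ + ‖σ20 y‖) * c₁⁻¹ := by
              apply mul_le_mul h3 h2 (by positivity) (by positivity)
          _ = c₁⁻¹ * (‖σ y‖ + ‖σ20 y‖) := mul_comm _ _
      simp only [hv₂def, if_pos hy, Real.norm_eq_abs]
      exact (hlogbound (θf y)).trans hti
    -- the gradient bounds
    have hkey : ∀ x ∈ Ω, ‖grad v₁ x‖ ≤ c₁⁻¹ * (‖grad σ1 x‖ + ‖grad w x‖) ∧
        ‖grad v₂ x‖ ≤ c₁⁻¹ * (‖grad σ1 x‖ + ‖grad w x‖) := by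
      intro x hx
      have hs : c₁ ≤ σ1 x := hc₁le x hx
      have hspos : 0 < σ1 x := hσ1pos x hx
      have hposd : (0:ℝ) < 1 + θf x ^ 2 := by positivity
      have hGn : ‖grad θf x‖ ≤ |θf x| * (σ1 x)⁻¹ * ‖grad σ1 x‖ + (σ1 x)⁻¹ * ‖grad w x‖ := by
        rw [hGθ x hx]
        refine (norm_add_le _ _).trans ?_
        rw [norm_smul, norm_smul, Real.norm_eq_abs, Real.norm_eq_abs]
        have hA : |w x * (-(σ1 x ^ 2)⁻¹)| = |θf x| * (σ1 x)⁻¹ := by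
          have ht' : |θf x| = |w x| * (σ1 x)⁻¹ := by
            simp only [hθf]
            rw [abs_mul, abs_inv, abs_of_pos hspos]
          rw [ht', abs_mul, abs_neg, abs_inv, abs_of_pos (pow_pos hspos 2), sq, mul_inv]
          ring
        have hB : |(σ1 x)⁻¹| = (σ1 x)⁻¹ := abs_of_pos (by positivity)
        rw [hA, hB]
      have hsinv : (σ1 x)⁻¹ ≤ c₁⁻¹ := inv_anti₀ hc₁pos hs
      have main : ∀ k : ℝ, |k| ≤ 1 → |k| * |θf x| ≤ 1 →
          ‖k • grad θf x‖ ≤ c₁⁻¹ * (‖grad σ1 x‖ + ‖grad w x‖) := by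
        intro k hk1 hk2
        rw [norm_smul, Real.norm_eq_abs]
        calc |k| * ‖grad θf x‖
            ≤ |k| * (|θf x| * (σ1 x)⁻¹ * ‖grad σ1 x‖ + (σ1 x)⁻¹ * ‖grad w x‖) :=
              mul_le_mul_of_nonneg_left hGn (abs_nonneg k)
          _ = (|k| * |θf x|) * ((σ1 x)⁻¹ * ‖grad σ1 x‖) + |k| * ((σ1 x)⁻¹ * ‖grad w x‖) := by
              ring
          _ ≤ 1 * ((σ1 x)⁻¹ * ‖grad σ1 x‖) + 1 * ((σ1 x)⁻¹ * ‖grad w x‖) := by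
              have h1 : (0:ℝ) ≤ (σ1 x)⁻¹ * ‖grad σ1 x‖ := by positivity
              have h2 : (0:ℝ) ≤ (σ1 x)⁻¹ * ‖grad w x‖ := by positivity
              exact add_le_add (mul_le_mul_of_nonneg_right hk2 h1)
                (mul_le_mul_of_nonneg_right hk1 h2)
          _ = (σ1 x)⁻¹ * ‖grad σ1 x‖ + (σ1 x)⁻¹ * ‖grad w x‖ := by ring
          _ ≤ c₁⁻¹ * ‖grad σ1 x‖ + c₁⁻¹ * ‖grad w x‖ :=
              add_le_add (mul_le_mul_of_nonneg_right hsinv (norm_nonneg _))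
                (mul_le_mul_of_nonneg_right hsinv (norm_nonneg _))
          _ = c₁⁻¹ * (‖grad σ1 x‖ + ‖grad w x‖) := by ring
      constructor
      · rw [hgradv₁ x hx]
        refine main _ ?_ ?_
        · rw [abs_of_pos (by positivity : (0:ℝ) < 1 / (1 + θf x ^ 2))]
          rw [div_le_one hposd]
          nlinarith [sq_nonneg (θf x)]
        · rw [abs_of_pos (by positivity : (0:ℝ) < 1 / (1 + θf x ^ 2))]
          rw [div_mul_eq_mul_div, one_mul, div_le_one hposd]
          nlinarith [sq_abs (θf x), abs_nonneg (θf x), sq_nonneg (|θf x| - 1)]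
      · rw [hgradv₂ x hx]
        refine main _ ?_ ?_
        · rw [abs_div, abs_of_pos hposd, div_le_one hposd]
          nlinarith [sq_abs (θf x), abs_nonneg (θf x), sq_nonneg (|θf x| - 1)]
        · rw [abs_div, abs_of_pos hposd, div_mul_eq_mul_div, div_le_one hposd]
          nlinarith [sq_abs (θf x), abs_nonneg (θf x)]
    have hdom : MemLp (fun x => c₁⁻¹ * (‖grad σ1 x‖ + ‖grad w x‖)) 2 (volume.restrict Ω) :=
      (hσ1H1.2.2.norm.add hwH1.2.2.norm).const_mul c₁⁻¹
    have hmemgradv₁ : MemLp (grad v₁) 2 (volume.restrict Ω) := by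
      refine MemLp.mono' hdom (aesm_grad _ _) ?_
      exact (ae_restrict_iff' hΩmeas).2 (Filter.Eventually.of_forall fun x hx => (hkey x hx).1)
    have hmemgradv₂ : MemLp (grad v₂) 2 (volume.restrict Ω) := by
      refine MemLp.mono' hdom (aesm_grad _ _) ?_
      exact (ae_restrict_iff' hΩmeas).2 (Filter.Eventually.of_forall fun x hx => (hkey x hx).2)
    have hv₁H1 : MemH1 Ω v₁ :=
      ⟨fun x hx => (hv₁der x hx).differentiableAt.differentiableWithinAt, hmemv₁, hmemgradv₁⟩
    have hv₂H1 : MemH1 Ω v₂ :=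
      ⟨fun x hx => (hv₂der x hx).differentiableAt.differentiableWithinAt, hmemv₂, hmemgradv₂⟩
    -- the weak equations
    have ha1 : aStar Ω b σ v₁ = ∫ x, gbn b ν μB x * v₁ x ∂μB := hσweak v₁ hv₁H1
    have ha2 : aStar Ω b σ20 v₁ = ∫ x, gbn b ν μB x * v₁ x ∂μB := hσ20weak v₁ hv₁H1
    have ha3 : aStar Ω b σ1 v₂ = 0 := hσ1weak v₂ hv₂H1
    have hi_σ := integrableOn_aStar_integrand hop hb hσH1 hv₁H1
    have hi_σ20 := integrableOn_aStar_integrand hop hb hσ20H1 hv₁H1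
    have hi_w := integrableOn_aStar_integrand hop hb hwH1 hv₁H1
    have hi_σ1 := integrableOn_aStar_integrand hop hb hσ1H1 hv₂H1
    have hE1 : ∫ x in Ω, (inner ℝ (grad w x + w x • b x) (grad v₁ x) : ℝ) = 0 := by
      have hsplit : ∀ x ∈ Ω, (inner ℝ (grad w x + w x • b x) (grad v₁ x) : ℝ) =
          (inner ℝ (grad σ x + σ x • b x) (grad v₁ x) : ℝ) -
          (inner ℝ (grad σ20 x + σ20 x • b x) (grad v₁ x) : ℝ) := by
        intro x hx
        have hσx := (hσH1.1 x hx).differentiableAt (hop.mem_nhds hx)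
        have hσ20x := (hσ20H1.1 x hx).differentiableAt (hop.mem_nhds hx)
        have hgw : grad w x = grad σ x - grad σ20 x := by
          have h1 := grad_eq_of_hasFDerivAt (f := w) (hσx.hasFDerivAt.sub hσ20x.hasFDerivAt)
          rw [map_sub] at h1
          rw [h1, ← grad_eq_symm_fderiv, ← grad_eq_symm_fderiv]
        rw [← inner_sub_left]
        congr 1
        rw [hgw]
        simp only [hw]
        rw [sub_smul]
        abel
      rw [setIntegral_congr_fun hΩmeas (fun x hx => hsplit x hx)]
      rw [integral_sub hi_σ hi_σ20]
      have e1 : ∫ x in Ω, (inner ℝ (grad σ x + σ x • b x) (grad v₁ x) : ℝ) =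
          ∫ x, gbn b ν μB x * v₁ x ∂μB := ha1
      have e2 : ∫ x in Ω, (inner ℝ (grad σ20 x + σ20 x • b x) (grad v₁ x) : ℝ) =
          ∫ x, gbn b ν μB x * v₁ x ∂μB := ha2
      rw [e1, e2, sub_self]
    have hE2 : ∫ x in Ω, (inner ℝ (grad σ1 x + σ1 x • b x) (grad v₂ x) : ℝ) = 0 := ha3
    set Nf : Ed d → ℝ := fun x => σ1 x * (‖grad θf x‖ ^ 2 / (1 + θf x ^ 2)) with hNf
    have hE3 : ∀ x ∈ Ω, (inner ℝ (grad w x + w x • b x) (grad v₁ x) : ℝ) -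
        (inner ℝ (grad σ1 x + σ1 x • b x) (grad v₂ x) : ℝ) = Nf x := by
      intro x hx
      have hs := hσ1ne x hx
      have hposd : (0:ℝ) < 1 + θf x ^ 2 := by positivity
      have hwts : w x = θf x * σ1 x := by
        simp only [hθf]
        field_simp
      rw [hgradv₁ x hx, hgradv₂ x hx, hGw x hx, hwts]
      simp only [hNf, inner_add_left, real_inner_smul_left, real_inner_smul_right]
      rw [← real_inner_self_eq_norm_sq]
      field_simp
      ring
    have hNint : IntegrableOn Nf Ω volume := by
      refine (Integrable.sub hi_w hi_σ1).congr ?_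
      refine (ae_restrict_iff' hΩmeas).2 (Filter.Eventually.of_forall fun x hx => ?_)
      exact hE3 x hx
    have hNzero : ∫ x in Ω, Nf x = 0 := by
      have h1 : ∫ x in Ω, ((inner ℝ (grad w x + w x • b x) (grad v₁ x) : ℝ) -
          (inner ℝ (grad σ1 x + σ1 x • b x) (grad v₂ x) : ℝ)) = ∫ x in Ω, Nf x :=
        setIntegral_congr_fun hΩmeas (fun x hx => hE3 x hx)
      rw [← h1, integral_sub hi_w hi_σ1, hE1, hE2, sub_zero]
    have hae0 : ∀ᵐ x ∂(volume.restrict Ω), Nf x = 0 := by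
      have hnn : 0 ≤ᵐ[volume.restrict Ω] Nf := by
        refine (ae_restrict_iff' hΩmeas).2 (Filter.Eventually.of_forall fun x hx => ?_)
        have hspos := hσ1pos x hx
        have : (0:ℝ) ≤ ‖grad θf x‖ ^ 2 / (1 + θf x ^ 2) := by positivity
        exact mul_nonneg hspos.le this
      exact (integral_eq_zero_iff_of_nonneg_ae hnn hNint).1 hNzero
    have hms : MeasurableSet {x : Ed d | ¬ fderiv ℝ θf x = 0} := by
      have h1 := measurable_fderiv ℝ (E := Ed d) θf
        ((measurableSet_singleton (0 : Ed d →L[ℝ] ℝ)).compl)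
      have h2 : {x : Ed d | ¬ fderiv ℝ θf x = 0} =
          (fderiv ℝ θf) ⁻¹' ({(0 : Ed d →L[ℝ] ℝ)}ᶜ) := by
        ext x; simp
      rw [h2]; exact h1
    have hfderiv0 : volume {z : Ed d | z ∈ Ω ∧ fderiv ℝ θf z ≠ 0} = 0 := by
      have h1 : ∀ᵐ x ∂(volume.restrict Ω), fderiv ℝ θf x = 0 := by
        filter_upwards [hae0, ae_restrict_mem hΩmeas] with x hx0 hxΩ
        have hspos := hσ1pos x hxΩ
        have hposd : (0:ℝ) < 1 + θf x ^ 2 := by positivity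
        have hfrac : ‖grad θf x‖ ^ 2 / (1 + θf x ^ 2) = 0 := by
          rcases mul_eq_zero.1 hx0 with h | h
          · exact absurd h hspos.ne'
          · exact h
        have hnorm : ‖grad θf x‖ = 0 := by
          have h5 := (div_eq_zero_iff.1 hfrac).resolve_right hposd.ne'
          exact (pow_eq_zero_iff (by norm_num : (2:ℕ) ≠ 0)).mp h5
        have hnorm2 : ‖fderiv ℝ θf x‖ = 0 := by
          rw [← (InnerProductSpace.toDual ℝ (Ed d)).symm.norm_map (fderiv ℝ θf x)]
          exact hnorm
        exact norm_eq_zero.1 hnorm2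
      have h2 := ae_iff.mp h1
      rw [Measure.restrict_apply hms] at h2
      have h3 : {z : Ed d | z ∈ Ω ∧ fderiv ℝ θf z ≠ 0} =
          {x : Ed d | ¬ fderiv ℝ θf x = 0} ∩ Ω := by
        ext z; simp [and_comm]
      rw [h3]; exact h2
    obtain ⟨x₀, hx₀⟩ := hne
    have hθdiff : ∀ x ∈ Ω, DifferentiableAt ℝ θf x :=
      fun x hx => (hθfder x hx).differentiableAt
    have hconst := const_of_fderiv_ae_zero hop hconn.isPreconnected hθdiff hfderiv0 hx₀
    have hEqOn : Set.EqOn σ (fun x => σ20 x + θf x₀ * σ1 x) Ω := by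
      intro x hx
      have hθx : θf x = θf x₀ := hconst x hx
      have hs := hσ1ne x hx
      have h1 : (σ x - σ20 x) * (σ1 x)⁻¹ = θf x₀ := hθx
      show σ x = σ20 x + θf x₀ * σ1 x
      field_simp at h1
      linarith
    refine ⟨θf x₀, hEqOn, cσ, hcσpos, fun x hx => ?_⟩
    exact le_of_le_of_eq (hcσle x hx) (hEqOn hx)
  · rintro ⟨κ, hEq, hC2⟩
    have hsumH1 : MemH1 Ω (fun x => σ20 x + κ * σ1 x) := by
      refine ⟨?_, hσ20H1.2.1.add (hσ1H1.2.1.const_mul κ), ?_⟩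
      · intro x hx
        exact (hσ20H1.1 x hx).add ((hσ1H1.1 x hx).const_mul κ)
      · refine (hσ20H1.2.2.add (hσ1H1.2.2.const_smul κ)).ae_eq ?_
        refine (ae_restrict_iff' hΩmeas).2 (Filter.Eventually.of_forall fun x hx => ?_)
        have h20 := (hσ20H1.1 x hx).differentiableAt (hop.mem_nhds hx)
        have h1 := (hσ1H1.1 x hx).differentiableAt (hop.mem_nhds hx)
        show grad σ20 x + κ • grad σ1 x = grad (fun y => σ20 y + κ * σ1 y) x
        have he := grad_eq_of_hasFDerivAt (f := fun y => σ20 y + κ * σ1 y) (h20.hasFDerivAt.add (h1.hasFDerivAt.const_mul κ))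
        rw [map_add, _root_.map_smul] at he
        rw [he, ← grad_eq_symm_fderiv, ← grad_eq_symm_fderiv]
    have hσH1 : MemH1 Ω σ := memH1_congr_eqOn hop hsumH1 hEq.symm
    have hgradσ : ∀ x ∈ Ω, grad σ x = grad σ20 x + κ • grad σ1 x := by
      intro x hx
      rw [eqOn_grad hop hEq x hx]
      have h20 := (hσ20H1.1 x hx).differentiableAt (hop.mem_nhds hx)
      have h1 := (hσ1H1.1 x hx).differentiableAt (hop.mem_nhds hx)
      have he := grad_eq_of_hasFDerivAt (f := fun y => σ20 y + κ * σ1 y) (h20.hasFDerivAt.add (h1.hasFDerivAt.const_mul κ))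
      rw [map_add, _root_.map_smul] at he
      rw [he, ← grad_eq_symm_fderiv, ← grad_eq_symm_fderiv]
    refine ⟨hσH1, ?_, ?_⟩
    · intro v hv
      have h20 := hσ20weak v hv
      have h1 := hσ1weak v hv
      have hi20 := integrableOn_aStar_integrand hop hb hσ20H1 hv
      have hi1 := integrableOn_aStar_integrand hop hb hσ1H1 hv
      have hsplit : ∀ x ∈ Ω, (inner ℝ (grad σ x + σ x • b x) (grad v x) : ℝ) =
          (inner ℝ (grad σ20 x + σ20 x • b x) (grad v x) : ℝ) +
          κ * (inner ℝ (grad σ1 x + σ1 x • b x) (grad v x) : ℝ) := by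
        intro x hx
        have hEqx : σ x = σ20 x + κ * σ1 x := hEq hx
        rw [hgradσ x hx, hEqx]
        have hvec : (grad σ20 x + κ • grad σ1 x) + (σ20 x + κ * σ1 x) • b x =
            (grad σ20 x + σ20 x • b x) + κ • (grad σ1 x + σ1 x • b x) := by
          rw [add_smul, smul_add, mul_smul]
          abel
        rw [hvec, inner_add_left, real_inner_smul_left]
      show aStar Ω b σ v = _
      unfold aStar
      rw [setIntegral_congr_fun hΩmeas (fun x hx => hsplit x hx)]
      rw [integral_add hi20 (hi1.const_mul κ), integral_const_mul]
      have e20 : ∫ x in Ω, (inner ℝ (grad σ20 x + σ20 x • b x) (grad v x) : ℝ) =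
          ∫ x, gbn b ν μB x * v x ∂μB := h20
      have e1 : ∫ x in Ω, (inner ℝ (grad σ1 x + σ1 x • b x) (grad v x) : ℝ) = 0 := h1
      rw [e20, e1, mul_zero, add_zero]
    · obtain ⟨c₂, hc₂pos, hc₂le⟩ := hC2
      refine ⟨c₂, hc₂pos, fun x hx => ?_⟩
      have h2 : σ x = σ20 x + κ * σ1 x := hEq hx
      rw [h2]
      exact hc₂le x hx
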